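/- There exists a nonempty subset B ⊆ Z/nZ such that g_B has coefficients in F_{q^r} and is Galois coprime (equivalently, a proper Galois supplemented cyclic code of length n over F_{q^r} exists) if and only if r divides the multiplicative order of q modulo n. -/

import Mathlib

/-!
The `q^i`-power Frobenius sends the roots `ζ^k` of `g_B` to `ζ^(q^i k)`, so it maps `g_B` to
`g_{q^i B}`. As the `ζ^k` are distinct, the two conditions say that `B ⊆ ℤ/nℤ` is stable under
multiplication by `q^r` and disjoint from `q^i B` for `0 < i < r`. By Bézout, such a `B` is also
stable under `q^d` with `d = gcd(r, ord q)`, which forces `d = r`. Conversely, if `r ∣ ord q`,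
the cyclic group generated by `q^r` is such a `B`: `q^i ∈ ⟨q^r⟩` means `i ≡ r k (mod ord q)`,
hence `r ∣ i`.
-/

open Polynomial

/-- Coefficientwise application of `x ↦ x^(q^i)` (the `i`-th power of the Frobenius
`σ : x ↦ x^q`) to a polynomial. -/
noncomputable def polyGal {L : Type*} [Field L] (q i : ℕ) (g : Polynomial L) : Polynomial L :=
  ∑ j ∈ g.support, Polynomial.C ((g.coeff j) ^ (q ^ i)) * Polynomial.X ^ j

/-- `g_B(x) = ∏_{k ∈ B} (x − ζ^k)` for a subset `B ⊆ ℤ/nℤ`. -/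
noncomputable def gB {L : Type*} [Field L] {n : ℕ} [NeZero n] (ζ : L) (B : Finset (ZMod n)) :
    Polynomial L :=
  ∏ k ∈ B, (Polynomial.X - Polynomial.C (ζ ^ (ZMod.val k)))

open scoped Pointwise

section Frobenius

variable {L : Type*} [Field L]

lemma polyGal_coeff {q : ℕ} (hq : 0 < q) (i : ℕ) (g : L[X]) (j : ℕ) :
    (polyGal q i g).coeff j = g.coeff j ^ q ^ i := by
  rw [polyGal, finsetSum_coeff]
  simp only [coeff_C_mul, coeff_X_pow, mul_ite, mul_one, mul_zero, Finset.sum_ite_eq]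
  split_ifs with h
  · rfl
  · rw [notMem_support_iff.mp h, zero_pow (pow_pos hq i).ne']

lemma polyGal_eq_self_iff {q : ℕ} (hq : 0 < q) (i : ℕ) (g : L[X]) :
    polyGal q i g = g ↔ ∀ j, g.coeff j ^ q ^ i = g.coeff j := by
  simp only [Polynomial.ext_iff, polyGal_coeff hq]

lemma polyGal_eq_map (p e : ℕ) [ExpChar L p] (i : ℕ) (g : L[X]) :
    polyGal (p ^ e) i g = g.map (iterateFrobenius L p (e * i)) := by
  ext j
  rw [polyGal_coeff (pow_pos (expChar_pos L p) e), coeff_map, iterateFrobenius_def, pow_mul]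

end Frobenius

section LinearFactors

lemma isCoprime_prod_X_sub_C_iff {K : Type*} [Field K] {s t : Finset K} :
    IsCoprime (∏ a ∈ s, (X - C a)) (∏ a ∈ t, (X - C a)) ↔ Disjoint s t := by
  refine ⟨fun h => Finset.disjoint_left.mpr fun a has hat => ?_, fun h => ?_⟩
  · exact not_isUnit_X_sub_C a
      (h.isUnit_of_dvd' (Finset.dvd_prod_of_mem _ has) (Finset.dvd_prod_of_mem _ hat))
  · refine IsCoprime.prod_left fun a ha => IsCoprime.prod_right fun b hb => ?_
    refine isCoprime_X_sub_C_of_isUnit_sub (sub_ne_zero.mpr ?_).isUnit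
    rintro rfl
    exact Finset.disjoint_left.mp h ha hb

lemma prod_X_sub_C_injective {R : Type*} [CommRing R] [IsDomain R] :
    Function.Injective fun s : Finset R => ∏ a ∈ s, (X - C a) := fun s t h =>
  Finset.val_injective (by simpa only [roots_prod_X_sub_C] using congrArg roots h)

end LinearFactors

section RootsOfUnity

variable {L : Type*} [Field L] {n : ℕ} {ζ : L}

lemma pow_val_pow_eq_pow_val_mul (hζ : ζ ^ n = 1) (k : ZMod n) (s : ℕ) :
    (ζ ^ k.val) ^ s = ζ ^ ((s : ZMod n) * k).val := by
  rw [← pow_mul, ZMod.val_mul, ZMod.val_natCast, Nat.mod_mul_mod, ← pow_eq_pow_mod _ hζ, mul_comm]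

variable [NeZero n]

lemma IsPrimitiveRoot.pow_val_injective (hζ : IsPrimitiveRoot ζ n) :
    Function.Injective fun k : ZMod n => ζ ^ k.val := fun k l h =>
  ZMod.val_injective n (hζ.pow_inj k.val_lt l.val_lt h)

lemma gB_eq_prod_image [DecidableEq L] (hζ : IsPrimitiveRoot ζ n) (B : Finset (ZMod n)) :
    gB ζ B = ∏ a ∈ B.image fun k => ζ ^ k.val, (X - C a) := by
  rw [gB, Finset.prod_image hζ.pow_val_injective.injOn]

lemma gB_injective (hζ : IsPrimitiveRoot ζ n) : Function.Injective (gB ζ (n := n)) :=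
  fun B B' h => by
    classical
    rw [gB_eq_prod_image hζ, gB_eq_prod_image hζ] at h
    exact Finset.image_injective hζ.pow_val_injective (prod_X_sub_C_injective h)

lemma isCoprime_gB_iff (hζ : IsPrimitiveRoot ζ n) {B B' : Finset (ZMod n)} :
    IsCoprime (gB ζ B) (gB ζ B') ↔ Disjoint B B' := by
  classical
  rw [gB_eq_prod_image hζ, gB_eq_prod_image hζ, isCoprime_prod_X_sub_C_iff,
    Finset.disjoint_image hζ.pow_val_injective]

lemma polyGal_gB (p e : ℕ) [ExpChar L p] (hζ : IsPrimitiveRoot ζ n) (u : (ZMod n)ˣ)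
    (hu : (u : ZMod n) = (p ^ e : ℕ)) (i : ℕ) (B : Finset (ZMod n)) :
    polyGal (p ^ e) i (gB ζ B) = gB ζ (u ^ i • B) := by
  rw [polyGal_eq_map, gB, gB, Polynomial.map_prod, Finset.smul_finset_def,
    Finset.prod_image (MulAction.injective _).injOn]
  refine Finset.prod_congr rfl fun k _ => ?_
  rw [Polynomial.map_sub, map_X, map_C, iterateFrobenius_def, pow_mul,
    pow_val_pow_eq_pow_val_mul hζ.pow_eq_one, Units.smul_def, Units.val_pow_eq_pow_val, hu,
    Nat.cast_pow (p ^ e), smul_eq_mul]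

end RootsOfUnity

section PowSmulFinset

variable {G α : Type*} [Group G] [MulAction G α] [DecidableEq α]

lemma dvd_orderOf_of_pow_smul_finset {g : G} {r : ℕ} (hr : 0 < r) {B : Finset α}
    (hB : B.Nonempty) (hfix : g ^ r • B = B)
    (hdisj : ∀ i, 0 < i → i < r → Disjoint B (g ^ i • B)) : r ∣ orderOf g := by
  set d := r.gcd (orderOf g)
  have hgd : g ^ d • B = B := by
    have hbezout : g ^ (d : ℤ) = (g ^ r) ^ r.gcdA (orderOf g) := by
      rw [Nat.gcd_eq_gcd_ab, zpow_add, zpow_mul, zpow_mul, zpow_natCast, zpow_natCast,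
        pow_orderOf_eq_one, one_zpow, mul_one]
    rw [← zpow_natCast, hbezout, ← MulAction.mem_stabilizer_iff]
    exact Subgroup.zpow_mem _ (MulAction.mem_stabilizer_iff.mpr hfix) _
  have hdr : d = r := by
    by_contra hne
    have h := hdisj d (Nat.gcd_pos_of_pos_left _ hr) (lt_of_le_of_ne (Nat.gcd_le_left _ hr) hne)
    rw [hgd, disjoint_self, Finset.bot_eq_empty] at h
    exact hB.ne_empty h
  exact hdr ▸ Nat.gcd_dvd_right r (orderOf g)

lemma exists_pow_smul_finset_of_dvd_orderOf [Finite α] {g : G} {r : ℕ} {x : α}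
    (hx : MulAction.stabilizer G x = ⊥) (h : r ∣ orderOf g) :
    ∃ B : Finset α, B.Nonempty ∧ g ^ r • B = B ∧
      ∀ i, 0 < i → i < r → Disjoint B (g ^ i • B) := by
  let H := Subgroup.zpowers (g ^ r)
  let B := (Set.toFinite (MulAction.orbit H x)).toFinset
  refine ⟨B, ⟨x, by simp [B, MulAction.mem_orbit_self]⟩, ?_, fun i hi hir => ?_⟩
  · apply Finset.coe_injective
    rw [Finset.coe_smul_finset, Set.Finite.coe_toFinset]
    exact MulAction.smul_orbit (⟨g ^ r, Subgroup.mem_zpowers _⟩ : H) x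
  · have hfree : ∀ a b : G, a • x = b • x → a = b := fun a b hab => inv_mul_eq_one.mp <| by
      rw [← Subgroup.mem_bot, ← hx, MulAction.mem_stabilizer_iff, mul_smul, ← hab, inv_smul_smul]
    refine Finset.disjoint_left.mpr fun y hy hy' => ?_
    obtain ⟨z, hz, rfl⟩ := Finset.mem_smul_finset.mp hy'
    simp only [B, Set.Finite.mem_toFinset, MulAction.mem_orbit_iff] at hy hz
    obtain ⟨h₂, rfl⟩ := hz
    obtain ⟨h₁, hh₁⟩ := hy
    have hmem : g ^ i ∈ H := by
      have hh : (h₁ : G) = g ^ i * h₂ :=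
        hfree _ _ (by rw [mul_smul, ← Subgroup.smul_def, hh₁, Subgroup.smul_def])
      rw [eq_mul_inv_of_mul_eq hh.symm]
      exact H.mul_mem h₁.2 (H.inv_mem h₂.2)
    obtain ⟨k, hk⟩ := Subgroup.mem_zpowers_iff.mp hmem
    have hone : g ^ ((r : ℤ) * k - i) = 1 := by
      rw [zpow_sub, zpow_mul, zpow_natCast, hk, zpow_natCast, mul_inv_cancel]
    have hri : (r : ℤ) ∣ i :=
      (dvd_sub_right (dvd_mul_right _ _)).mp
        ((Int.natCast_dvd_natCast.mpr h).trans (orderOf_dvd_iff_zpow_eq_one.mpr hone))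
    exact hi.ne' (Nat.eq_zero_of_dvd_of_lt (Int.natCast_dvd_natCast.mp hri) hir)

lemma exists_pow_smul_finset_iff_dvd_orderOf [Finite α] {g : G} {r : ℕ} (hr : 0 < r) {x : α}
    (hx : MulAction.stabilizer G x = ⊥) :
    (∃ B : Finset α, B.Nonempty ∧ g ^ r • B = B ∧
      ∀ i, 0 < i → i < r → Disjoint B (g ^ i • B)) ↔ r ∣ orderOf g :=
  ⟨fun ⟨_, hB, hfix, hdisj⟩ => dvd_orderOf_of_pow_smul_finset hr hB hfix hdisj,
    exists_pow_smul_finset_of_dvd_orderOf hx⟩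

end PowSmulFinset

lemma MulAction.stabilizer_units_one {M : Type*} [Monoid M] : stabilizer Mˣ (1 : M) = ⊥ := by
  ext u
  simp [mem_stabilizer_iff, Units.smul_def]

theorem stmt11_general (p e q r n : ℕ) (hp : p.Prime) (hq : q = p ^ e)
    (hr : 1 < r) [NeZero n] (hcop : Nat.Coprime n q)
    (L : Type*) [Field L] [CharP L p]
    (ζ : L) (hζ : IsPrimitiveRoot ζ n) :
    (∃ B : Finset (ZMod n), B.Nonempty ∧
        (∀ j : ℕ, ((gB ζ B).coeff j) ^ (q ^ r) = (gB ζ B).coeff j) ∧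
        (∀ i : ℕ, 0 < i → i < r → IsCoprime (gB ζ B) (polyGal q i (gB ζ B)))) ↔
      r ∣ orderOf ((q : ZMod n)) := by
  subst hq
  have := Fact.mk hp
  set u := ZMod.unitOfCoprime (p ^ e) hcop.symm
  have hu : (u : ZMod n) = (p ^ e : ℕ) := ZMod.coe_unitOfCoprime _ _
  have hfix (B : Finset (ZMod n)) :
      (∀ j, (gB ζ B).coeff j ^ (p ^ e) ^ r = (gB ζ B).coeff j) ↔ u ^ r • B = B := by
    rw [← polyGal_eq_self_iff (pow_pos hp.pos e), polyGal_gB p e hζ u hu, (gB_injective hζ).eq_iff]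
  have hcopr (B : Finset (ZMod n)) (i : ℕ) :
      IsCoprime (gB ζ B) (polyGal (p ^ e) i (gB ζ B)) ↔ Disjoint B (u ^ i • B) := by
    rw [polyGal_gB p e hζ u hu, isCoprime_gB_iff hζ]
  simp only [hfix, hcopr]
  rw [← hu, orderOf_units]
  exact exists_pow_smul_finset_iff_dvd_orderOf (by omega) MulAction.stabilizer_units_one

/-- there exists a nonempty `B ⊆ ℤ/nℤ` such that `g_B` has coefficients in
`F_{q^r}` and is Galois coprime (equivalently, a proper Galois supplemented cyclic code of
length `n` over `F_{q^r}` exists) iff `r` divides the multiplicative order of `q` mod `n`.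
Here `ζ` is a primitive `n`-th root of unity in the splitting field `L` of `x^n − 1` over
`F_{q^r}`; membership of a coefficient `c` in `F_{q^r}` reads `c^(q^r) = c`, and the
non-trivial elements of `Gal(F_{q^r}/F_q)` act as `x ↦ x^(q^i)`, `1 ≤ i < r`. -/
theorem stmt11 (p e q r n : ℕ) (hp : p.Prime) (he : 0 < e) (hq : q = p ^ e)
    (hr : 1 < r) [NeZero n] (hcop : Nat.Coprime n q)
    (L : Type*) [Field L] [Fintype L] [CharP L p]
    (ζ : L) (hζ : IsPrimitiveRoot ζ n) :
    (∃ B : Finset (ZMod n), B.Nonempty ∧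
        (∀ j : ℕ, ((gB ζ B).coeff j) ^ (q ^ r) = (gB ζ B).coeff j) ∧
        (∀ i : ℕ, 0 < i → i < r → IsCoprime (gB ζ B) (polyGal q i (gB ζ B)))) ↔
      r ∣ orderOf ((q : ZMod n)) :=
  stmt11_general p e q r n hp hq hr hcop L ζ hζ
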